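/- arXiv:1507.05974 — 2 statements merged into one kernel-verified Lean document; each statement's English description precedes it below -/
import Mathlib

section
/- For a nontrivial quasi Yamabe gradient soliton (M^n, g, f) satisfying (R − λ)g_{ij} = ∇_i∇_j f − (1/m)∇_i f∇_j f, the Cao–Chen tensor satisfies D_{ijk} = W_{ijkl}∇^l f. -/
open scoped BigOperators

noncomputable section

variable {n : ℕ}

/-- The partial derivative of a function in the `i`-th coordinate direction. -/
def pd (h : EuclideanSpace ℝ (Fin n) → ℝ) (i : Fin n) (x : EuclideanSpace ℝ (Fin n)) : ℝ :=
  fderiv ℝ h x (EuclideanSpace.single i 1)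

/-- The Christoffel symbols `Γ^k_{ij}` of a Riemannian metric `g` given in local
coordinates on an open chart (`ginv` denotes the inverse metric). -/
def christoffel (g ginv : EuclideanSpace ℝ (Fin n) → Fin n → Fin n → ℝ)
    (k i j : Fin n) (x : EuclideanSpace ℝ (Fin n)) : ℝ :=
  (1 / 2) * ∑ l, ginv x k l *
    (pd (fun y => g y j l) i x + pd (fun y => g y i l) j x - pd (fun y => g y i j) l x)

/-- The Riemann curvature tensor `R^l_{ijk}` (component `l` of `R(∂_i,∂_j)∂_k`). -/
def riemUp (g ginv : EuclideanSpace ℝ (Fin n) → Fin n → Fin n → ℝ)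
    (l i j k : Fin n) (x : EuclideanSpace ℝ (Fin n)) : ℝ :=
  pd (christoffel g ginv l j k) i x - pd (christoffel g ginv l i k) j x
    + ∑ p, christoffel g ginv l i p x * christoffel g ginv p j k x
    - ∑ p, christoffel g ginv l j p x * christoffel g ginv p i k x

/-- The covariant Riemann curvature tensor `R_{ijkl}`, normalized so that
`Ric_{ik} = g^{jl} R_{ijkl}`. -/
def riemLow (g ginv : EuclideanSpace ℝ (Fin n) → Fin n → Fin n → ℝ)
    (i j k l : Fin n) (x : EuclideanSpace ℝ (Fin n)) : ℝ :=
  ∑ m, g x k m * riemUp g ginv m i j l x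

/-- The Ricci curvature `R_{ik}`. -/
def ricci (g ginv : EuclideanSpace ℝ (Fin n) → Fin n → Fin n → ℝ)
    (i k : Fin n) (x : EuclideanSpace ℝ (Fin n)) : ℝ :=
  ∑ j, riemUp g ginv j j i k x

/-- The scalar curvature `R = g^{ik} R_{ik}`. -/
def scal (g ginv : EuclideanSpace ℝ (Fin n) → Fin n → Fin n → ℝ)
    (x : EuclideanSpace ℝ (Fin n)) : ℝ :=
  ∑ i, ∑ k, ginv x i k * ricci g ginv i k x

/-- The covariant Hessian `∇_i∇_j f`. -/
def hess (g ginv : EuclideanSpace ℝ (Fin n) → Fin n → Fin n → ℝ)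
    (f : EuclideanSpace ℝ (Fin n) → ℝ) (i j : Fin n) (x : EuclideanSpace ℝ (Fin n)) : ℝ :=
  pd (pd f j) i x - ∑ k, christoffel g ginv k i j x * pd f k x

/-- The gradient `∇^l f = g^{lm} ∇_m f`. -/
def gradUp (ginv : EuclideanSpace ℝ (Fin n) → Fin n → Fin n → ℝ)
    (f : EuclideanSpace ℝ (Fin n) → ℝ) (l : Fin n) (x : EuclideanSpace ℝ (Fin n)) : ℝ :=
  ∑ m, ginv x l m * pd f m x

/-- The Weyl curvature tensor `W_{ijkl}`, defined by the standard decomposition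
of the Riemann tensor. -/
def weyl (g ginv : EuclideanSpace ℝ (Fin n) → Fin n → Fin n → ℝ)
    (i j k l : Fin n) (x : EuclideanSpace ℝ (Fin n)) : ℝ :=
  riemLow g ginv i j k l x
    - (1 / ((n : ℝ) - 2)) *
        (ricci g ginv i k x * g x j l + ricci g ginv j l x * g x i k
          - ricci g ginv i l x * g x j k - ricci g ginv j k x * g x i l)
    + (scal g ginv x / (((n : ℝ) - 1) * ((n : ℝ) - 2))) *
        (g x j l * g x i k - g x i l * g x j k)

/-- The Cao–Chen 3-tensor `D_{ijk}`. -/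
def caoChenD (g ginv : EuclideanSpace ℝ (Fin n) → Fin n → Fin n → ℝ)
    (f : EuclideanSpace ℝ (Fin n) → ℝ) (i j k : Fin n) (x : EuclideanSpace ℝ (Fin n)) : ℝ :=
  (1 / ((n : ℝ) - 2)) * (ricci g ginv j k x * pd f i x - ricci g ginv i k x * pd f j x)
    + (1 / (((n : ℝ) - 1) * ((n : ℝ) - 2))) *
        ((∑ l, ricci g ginv i l x * gradUp ginv f l x) * g x j k
          - (∑ l, ricci g ginv j l x * gradUp ginv f l x) * g x i k)
    - (scal g ginv x / (((n : ℝ) - 1) * ((n : ℝ) - 2))) *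
        (g x j k * pd f i x - g x i k * pd f j x)

namespace QY

variable {n : ℕ}

/-! ### pd calculus -/

lemma pd_congr {h1 h2 : EuclideanSpace ℝ (Fin n) → ℝ} (h : ∀ y, h1 y = h2 y) (i : Fin n)
    (x : EuclideanSpace ℝ (Fin n)) : pd h1 i x = pd h2 i x := by
  have : h1 = h2 := funext h
  rw [this]

lemma contDiff_pd {h : EuclideanSpace ℝ (Fin n) → ℝ} (hh : ContDiff ℝ (⊤ : ℕ∞) h) (i : Fin n) :
    ContDiff ℝ (⊤ : ℕ∞) (pd h i) := by
  have h1 : ContDiff ℝ (⊤ : ℕ∞) (fderiv ℝ h) := hh.fderiv_right (by exact le_of_eq (by simp))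
  exact h1.clm_apply contDiff_const

lemma pd_add {a b : EuclideanSpace ℝ (Fin n) → ℝ} (ha : ContDiff ℝ (⊤ : ℕ∞) a) (hb : ContDiff ℝ (⊤ : ℕ∞) b)
    (i : Fin n) (x : EuclideanSpace ℝ (Fin n)) :
    pd (fun y => a y + b y) i x = pd a i x + pd b i x := by
  unfold pd
  rw [fderiv_fun_add (ha.differentiable (by simp) x) (hb.differentiable (by simp) x)]
  simp

lemma pd_sub {a b : EuclideanSpace ℝ (Fin n) → ℝ} (ha : ContDiff ℝ (⊤ : ℕ∞) a) (hb : ContDiff ℝ (⊤ : ℕ∞) b)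
    (i : Fin n) (x : EuclideanSpace ℝ (Fin n)) :
    pd (fun y => a y - b y) i x = pd a i x - pd b i x := by
  unfold pd
  rw [fderiv_fun_sub (ha.differentiable (by simp) x) (hb.differentiable (by simp) x)]
  simp

lemma pd_mul {a b : EuclideanSpace ℝ (Fin n) → ℝ} (ha : ContDiff ℝ (⊤ : ℕ∞) a) (hb : ContDiff ℝ (⊤ : ℕ∞) b)
    (i : Fin n) (x : EuclideanSpace ℝ (Fin n)) :
    pd (fun y => a y * b y) i x = pd a i x * b x + a x * pd b i x := by
  unfold pd
  rw [fderiv_fun_mul (ha.differentiable (by simp) x) (hb.differentiable (by simp) x)]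
  simp
  ring

lemma pd_const (c : ℝ) (i : Fin n) (x : EuclideanSpace ℝ (Fin n)) :
    pd (fun _ => c) i x = 0 := by
  unfold pd
  rw [fderiv_fun_const]
  simp

lemma pd_const_mul {a : EuclideanSpace ℝ (Fin n) → ℝ} (ha : ContDiff ℝ (⊤ : ℕ∞) a) (c : ℝ)
    (i : Fin n) (x : EuclideanSpace ℝ (Fin n)) :
    pd (fun y => c * a y) i x = c * pd a i x := by
  rw [pd_mul contDiff_const ha, pd_const]
  ring

lemma pd_sum {ι : Type*} (s : Finset ι) (F : ι → EuclideanSpace ℝ (Fin n) → ℝ)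
    (hF : ∀ k ∈ s, ContDiff ℝ (⊤ : ℕ∞) (F k)) (i : Fin n) (x : EuclideanSpace ℝ (Fin n)) :
    pd (fun y => ∑ k ∈ s, F k y) i x = ∑ k ∈ s, pd (F k) i x := by
  unfold pd
  rw [fderiv_fun_sum (fun k hk => (hF k hk).differentiable (by simp) x)]
  simp

lemma pd_comm {h : EuclideanSpace ℝ (Fin n) → ℝ} (hh : ContDiff ℝ (⊤ : ℕ∞) h)
    (a b : Fin n) (x : EuclideanSpace ℝ (Fin n)) :
    pd (pd h a) b x = pd (pd h b) a x := by
  have hdiff : Differentiable ℝ h := hh.differentiable (by simp)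
  have h1 : ContDiff ℝ (⊤ : ℕ∞) (fderiv ℝ h) := hh.fderiv_right (by exact le_of_eq (by simp))
  have hd2 : DifferentiableAt ℝ (fderiv ℝ h) x := (h1.differentiable (by simp)) x
  have key : ∀ v w, pd (pd h v) w x = fderiv ℝ (fderiv ℝ h) x (EuclideanSpace.single w 1)
      (EuclideanSpace.single v 1) := by
    intro v w
    unfold pd
    rw [fderiv_clm_apply hd2 (differentiableAt_const _)]
    simp
  rw [key a b, key b a]
  exact second_derivative_symmetric (f' := fderiv ℝ h) (fun y => (hdiff y).hasFDerivAt)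
    hd2.hasFDerivAt _ _

end QY
namespace QY

variable {n : ℕ}

lemma contDiff_finset_prod {ι : Type*} (s : Finset ι) (F : ι → EuclideanSpace ℝ (Fin n) → ℝ)
    (h : ∀ i ∈ s, ContDiff ℝ (⊤ : ℕ∞) (F i)) : ContDiff ℝ (⊤ : ℕ∞) fun x => ∏ i ∈ s, F i x := by
  classical
  induction s using Finset.induction with
  | empty => simpa using contDiff_const
  | insert _ _ hx ih =>
    rename_i a s'
    simp only [Finset.prod_insert hx]
    exact (h a (Finset.mem_insert_self a s')).mul
      (ih fun i hi => h i (Finset.mem_insert_of_mem hi))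

lemma contDiff_det {N : ℕ} {M : EuclideanSpace ℝ (Fin n) → Matrix (Fin N) (Fin N) ℝ}
    (h : ∀ i j, ContDiff ℝ (⊤ : ℕ∞) fun x => M x i j) :
    ContDiff ℝ (⊤ : ℕ∞) fun x => (M x).det := by
  simp only [Matrix.det_apply]
  apply ContDiff.sum
  intro σ _
  simp only [Units.smul_def, zsmul_eq_mul]
  exact contDiff_const.mul (contDiff_finset_prod _ _ fun i _ => h _ _)

/-- Bundled setup: metric, inverse metric, potential function and their properties. -/
structure Setup (n : ℕ) where
  g : EuclideanSpace ℝ (Fin n) → Fin n → Fin n → ℝ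
  ginv : EuclideanSpace ℝ (Fin n) → Fin n → Fin n → ℝ
  f : EuclideanSpace ℝ (Fin n) → ℝ
  hg : ∀ i j, ContDiff ℝ (⊤ : ℕ∞) fun y => g y i j
  hgsym : ∀ x i j, g x i j = g x j i
  hginv : ∀ x i j, (∑ k, g x i k * ginv x k j) = if i = j then (1 : ℝ) else 0
  hf : ContDiff ℝ (⊤ : ℕ∞) f

namespace Setup

variable (S : Setup n)

/-- The metric as a matrix. -/
def Gm (x : EuclideanSpace ℝ (Fin n)) : Matrix (Fin n) (Fin n) ℝ := Matrix.of (S.g x)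

lemma Gm_mul_ginv (x : EuclideanSpace ℝ (Fin n)) :
    S.Gm x * Matrix.of (S.ginv x) = 1 := by
  ext i j
  simp only [Matrix.mul_apply, Gm, Matrix.of_apply, Matrix.one_apply]
  exact S.hginv x i j

lemma ginv_eq_inv (x : EuclideanSpace ℝ (Fin n)) :
    Matrix.of (S.ginv x) = (S.Gm x)⁻¹ :=
  (Matrix.inv_eq_right_inv (S.Gm_mul_ginv x)).symm

lemma hginv' (x : EuclideanSpace ℝ (Fin n)) (i j : Fin n) :
    (∑ k, S.ginv x i k * S.g x k j) = if i = j then (1 : ℝ) else 0 := by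
  have h : Matrix.of (S.ginv x) * S.Gm x = 1 :=
    mul_eq_one_comm.mp (S.Gm_mul_ginv x)
  have := congrFun (congrFun h i) j
  simpa [Matrix.mul_apply, Gm, Matrix.one_apply] using this

lemma ginv_symm (x : EuclideanSpace ℝ (Fin n)) (i j : Fin n) :
    S.ginv x i j = S.ginv x j i := by
  have hsym : Matrix.transpose (S.Gm x) = S.Gm x := by
    ext a b; exact S.hgsym x b a
  have h1 : Matrix.transpose ((S.Gm x)⁻¹) = (S.Gm x)⁻¹ := by
    rw [Matrix.transpose_nonsing_inv, hsym]
  have := congrFun (congrFun h1 i) j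
  simp only [Matrix.transpose_apply] at this
  rw [← S.ginv_eq_inv] at this
  exact this.symm

lemma contDiff_Gm_entry (i j : Fin n) : ContDiff ℝ (⊤ : ℕ∞) fun x => S.Gm x i j := S.hg i j

lemma det_Gm_ne_zero (x : EuclideanSpace ℝ (Fin n)) : (S.Gm x).det ≠ 0 := by
  intro h0
  have h := congrArg Matrix.det (S.Gm_mul_ginv x)
  rw [Matrix.det_mul, h0, zero_mul, Matrix.det_one] at h
  exact zero_ne_one h

lemma contDiff_ginv (i j : Fin n) : ContDiff ℝ (⊤ : ℕ∞) fun x => S.ginv x i j := by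
  have hrep : ∀ x, S.ginv x i j =
      ((S.Gm x).det)⁻¹ * (S.Gm x).adjugate i j := by
    intro x
    have h1 : Matrix.of (S.ginv x) i j = (S.Gm x)⁻¹ i j := by rw [S.ginv_eq_inv]
    have h2 : (S.Gm x)⁻¹ i j = (Ring.inverse (S.Gm x).det • (S.Gm x).adjugate) i j := by
      rw [← Matrix.inv_def]
    simpa [Ring.inverse_eq_inv, Matrix.smul_apply, smul_eq_mul] using h1.trans h2
  have hadj : ContDiff ℝ (⊤ : ℕ∞) fun x => (S.Gm x).adjugate i j := by
    simp only [Matrix.adjugate_apply]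
    apply contDiff_det
    intro a b
    by_cases hab : a = j
    · subst hab
      simp only [Matrix.updateRow_self]
      exact contDiff_const
    · simp only [Matrix.updateRow_ne hab]
      exact S.hg a b
  have hdetinv : ContDiff ℝ (⊤ : ℕ∞) fun x => ((S.Gm x).det)⁻¹ := by
    rw [contDiff_iff_contDiffAt]
    intro x
    exact ((contDiff_det S.contDiff_Gm_entry).contDiffAt).inv (S.det_Gm_ne_zero x)
  have heq : (fun x => S.ginv x i j) = fun x => ((S.Gm x).det)⁻¹ * (S.Gm x).adjugate i j :=
    funext hrep
  rw [heq]
  exact hdetinv.mul hadj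

end Setup

end QY
namespace QY

variable {n : ℕ}

namespace Setup

variable (S : Setup n)

/-- Christoffel symbols of the first kind. -/
def cLow (c a b : Fin n) (x : EuclideanSpace ℝ (Fin n)) : ℝ :=
  (1 / 2) * (pd (fun y => S.g y b c) a x + pd (fun y => S.g y a c) b x
    - pd (fun y => S.g y a b) c x)

lemma contDiff_cLow (c a b : Fin n) : ContDiff ℝ (⊤ : ℕ∞) (S.cLow c a b) := by
  unfold cLow
  exact contDiff_const.mul (((contDiff_pd (S.hg b c) a).add (contDiff_pd (S.hg a c) b)).sub
    (contDiff_pd (S.hg a b) c))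

lemma cLow_symm (c a b : Fin n) (x : EuclideanSpace ℝ (Fin n)) :
    S.cLow c a b x = S.cLow c b a x := by
  unfold cLow
  rw [pd_congr (fun y => S.hgsym y a b) c x]
  ring

lemma contDiff_christoffel (k i j : Fin n) :
    ContDiff ℝ (⊤ : ℕ∞) fun x => christoffel S.g S.ginv k i j x := by
  unfold christoffel
  exact contDiff_const.mul (ContDiff.sum fun l _ => (S.contDiff_ginv k l).mul
    (((contDiff_pd (S.hg j l) i).add (contDiff_pd (S.hg i l) j)).sub
      (contDiff_pd (S.hg i j) l)))

lemma christoffel_symm (k i j : Fin n) (x : EuclideanSpace ℝ (Fin n)) :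
    christoffel S.g S.ginv k i j x = christoffel S.g S.ginv k j i x := by
  unfold christoffel
  congr 1
  apply Finset.sum_congr rfl
  intro l _
  rw [pd_congr (fun y => S.hgsym y i j) l x]
  ring

lemma gchristoffel (x : EuclideanSpace ℝ (Fin n)) (c a b : Fin n) :
    ∑ m', S.g x c m' * christoffel S.g S.ginv m' a b x = S.cLow c a b x := by
  have h1 : ∀ m', S.g x c m' * christoffel S.g S.ginv m' a b x
      = ∑ l, (S.g x c m' * S.ginv x m' l) *
          ((1 / 2) * (pd (fun y => S.g y b l) a x + pd (fun y => S.g y a l) b x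
            - pd (fun y => S.g y a b) l x)) := by
    intro m'
    unfold christoffel
    rw [Finset.mul_sum, Finset.mul_sum]
    apply Finset.sum_congr rfl
    intros
    ring
  simp only [h1]
  rw [Finset.sum_comm]
  have h2 : ∀ l, (∑ m', (S.g x c m' * S.ginv x m' l) *
      ((1 / 2) * (pd (fun y => S.g y b l) a x + pd (fun y => S.g y a l) b x
        - pd (fun y => S.g y a b) l x)))
      = (if c = l then (1:ℝ) else 0) * ((1 / 2) * (pd (fun y => S.g y b l) a x
        + pd (fun y => S.g y a l) b x - pd (fun y => S.g y a b) l x)) := by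
    intro l
    rw [← Finset.sum_mul, S.hginv]
  simp only [h2, ite_mul, one_mul, zero_mul, Finset.sum_ite_eq, Finset.mem_univ, if_true]
  rfl

lemma christoffel_eq (k a b : Fin n) (x : EuclideanSpace ℝ (Fin n)) :
    christoffel S.g S.ginv k a b x = ∑ q, S.ginv x k q * S.cLow q a b x := by
  unfold christoffel cLow
  rw [Finset.mul_sum]
  apply Finset.sum_congr rfl
  intros
  ring

lemma pd_g (a b c : Fin n) (x : EuclideanSpace ℝ (Fin n)) :
    pd (fun y => S.g y a b) c x = S.cLow a c b x + S.cLow b c a x := by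
  unfold cLow
  rw [pd_congr (fun y => S.hgsym y b a) c x]
  ring

lemma contDiff_riemUp (l i j k : Fin n) :
    ContDiff ℝ (⊤ : ℕ∞) fun x => riemUp S.g S.ginv l i j k x := by
  unfold riemUp
  exact (((contDiff_pd (S.contDiff_christoffel l j k) i).sub
      (contDiff_pd (S.contDiff_christoffel l i k) j)).add
    (ContDiff.sum fun p _ => (S.contDiff_christoffel l i p).mul
      (S.contDiff_christoffel p j k))).sub
    (ContDiff.sum fun p _ => (S.contDiff_christoffel l j p).mul
      (S.contDiff_christoffel p i k))

lemma contDiff_ricci (i k : Fin n) : ContDiff ℝ (⊤ : ℕ∞) fun x => ricci S.g S.ginv i k x := by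
  unfold ricci
  exact ContDiff.sum fun j _ => S.contDiff_riemUp j j i k

lemma contDiff_scal : ContDiff ℝ (⊤ : ℕ∞) fun x => scal S.g S.ginv x := by
  unfold scal
  exact ContDiff.sum fun i _ => ContDiff.sum fun k _ =>
    (S.contDiff_ginv i k).mul (S.contDiff_ricci i k)

end Setup

end QY
namespace QY

variable {n : ℕ}

namespace Setup

variable (S : Setup n)

/-- Quadratic Christoffel expression. -/
def P (a b c d : Fin n) (x : EuclideanSpace ℝ (Fin n)) : ℝ :=
  ∑ m', ∑ q, S.cLow m' a b x * S.ginv x m' q * S.cLow q c d x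

lemma P_pair (a b c d : Fin n) (x : EuclideanSpace ℝ (Fin n)) :
    S.P a b c d x = S.P c d a b x := by
  unfold P
  rw [Finset.sum_comm]
  apply Finset.sum_congr rfl
  intro m' _
  apply Finset.sum_congr rfl
  intro q _
  rw [S.ginv_symm x q m']
  ring

lemma sumC (x : EuclideanSpace ℝ (Fin n)) (a b c d : Fin n) :
    ∑ m', S.cLow m' a b x * christoffel S.g S.ginv m' c d x = S.P a b c d x := by
  unfold P
  apply Finset.sum_congr rfl
  intro m' _
  rw [S.christoffel_eq m' c d x, Finset.mul_sum]
  apply Finset.sum_congr rfl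
  intro q _
  ring

lemma sumA (x : EuclideanSpace ℝ (Fin n)) (k a b c : Fin n) :
    ∑ m', S.g x k m' * pd (christoffel S.g S.ginv m' a b) c x
      = pd (S.cLow k a b) c x
        - ∑ m', pd (fun y => S.g y k m') c x * christoffel S.g S.ginv m' a b x := by
  have h1 : pd (S.cLow k a b) c x
      = pd (fun y => ∑ m', S.g y k m' * christoffel S.g S.ginv m' a b y) c x :=
    pd_congr (fun y => (S.gchristoffel y k a b).symm) c x
  rw [h1, pd_sum _ _ (fun m' _ => (S.hg k m').mul (S.contDiff_christoffel m' a b)) c x]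
  have h2 : ∀ m' ∈ Finset.univ, pd (fun y => S.g y k m' * christoffel S.g S.ginv m' a b y) c x
      = pd (fun y => S.g y k m') c x * christoffel S.g S.ginv m' a b x
        + S.g x k m' * pd (christoffel S.g S.ginv m' a b) c x :=
    fun m' _ => pd_mul (S.hg k m') (S.contDiff_christoffel m' a b) c x
  rw [Finset.sum_congr rfl h2, Finset.sum_add_distrib]
  ring

lemma sumB (x : EuclideanSpace ℝ (Fin n)) (k a c d : Fin n) :
    ∑ m', S.g x k m' * ∑ p, christoffel S.g S.ginv m' a p x * christoffel S.g S.ginv p c d x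
      = ∑ p, S.cLow k a p x * christoffel S.g S.ginv p c d x := by
  have h1 : ∀ m' ∈ Finset.univ,
      S.g x k m' * ∑ p, christoffel S.g S.ginv m' a p x * christoffel S.g S.ginv p c d x
      = ∑ p, (S.g x k m' * christoffel S.g S.ginv m' a p x) * christoffel S.g S.ginv p c d x := by
    intro m' _
    rw [Finset.mul_sum]
    apply Finset.sum_congr rfl
    intros
    ring
  rw [Finset.sum_congr rfl h1, Finset.sum_comm]
  apply Finset.sum_congr rfl
  intro p _
  rw [← Finset.sum_mul, S.gchristoffel x k a p]

lemma riemLow_formula (i j k l : Fin n) (x : EuclideanSpace ℝ (Fin n)) :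
    riemLow S.g S.ginv i j k l x
      = pd (S.cLow k j l) i x - pd (S.cLow k i l) j x - S.P i k j l x + S.P j k i l x := by
  unfold riemLow riemUp
  have hsplit : ∀ m' ∈ Finset.univ, S.g x k m' *
      (pd (christoffel S.g S.ginv m' j l) i x - pd (christoffel S.g S.ginv m' i l) j x
        + ∑ p, christoffel S.g S.ginv m' i p x * christoffel S.g S.ginv p j l x
        - ∑ p, christoffel S.g S.ginv m' j p x * christoffel S.g S.ginv p i l x)
      = S.g x k m' * pd (christoffel S.g S.ginv m' j l) i x
        - S.g x k m' * pd (christoffel S.g S.ginv m' i l) j x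
        + S.g x k m' * ∑ p, christoffel S.g S.ginv m' i p x * christoffel S.g S.ginv p j l x
        - S.g x k m' * ∑ p, christoffel S.g S.ginv m' j p x * christoffel S.g S.ginv p i l x := by
    intros; ring
  rw [Finset.sum_congr rfl hsplit]
  simp only [Finset.sum_add_distrib, Finset.sum_sub_distrib]
  rw [S.sumA x k j l i, S.sumA x k i l j, S.sumB x k i j l, S.sumB x k j i l]
  have hT1 : ∑ m', pd (fun y => S.g y k m') i x * christoffel S.g S.ginv m' j l x
      = ∑ m', S.cLow k i m' x * christoffel S.g S.ginv m' j l x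
        + ∑ m', S.cLow m' i k x * christoffel S.g S.ginv m' j l x := by
    rw [← Finset.sum_add_distrib]
    apply Finset.sum_congr rfl
    intro m' _
    rw [S.pd_g k m' i x]
    ring
  have hT2 : ∑ m', pd (fun y => S.g y k m') j x * christoffel S.g S.ginv m' i l x
      = ∑ m', S.cLow k j m' x * christoffel S.g S.ginv m' i l x
        + ∑ m', S.cLow m' j k x * christoffel S.g S.ginv m' i l x := by
    rw [← Finset.sum_add_distrib]
    apply Finset.sum_congr rfl
    intro m' _
    rw [S.pd_g k m' j x]
    ring
  rw [hT1, hT2, S.sumC x i k j l, S.sumC x j k i l]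
  have e1 : ∑ p, S.cLow k i p x * christoffel S.g S.ginv p j l x
      = ∑ m', S.cLow k i m' x * christoffel S.g S.ginv m' j l x := rfl
  have e2 : ∑ p, S.cLow k j p x * christoffel S.g S.ginv p i l x
      = ∑ m', S.cLow k j m' x * christoffel S.g S.ginv m' i l x := rfl
  rw [e1, e2]
  ring

lemma riemLow_antisym34 (i j k l : Fin n) (x : EuclideanSpace ℝ (Fin n)) :
    riemLow S.g S.ginv i j k l x = - riemLow S.g S.ginv i j l k x := by
  have hcomb : ∀ c d : Fin n,
      pd (S.cLow k d l) c x + pd (S.cLow l d k) c x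
        = pd (pd (fun y => S.g y k l) d) c x := by
    intro c d
    rw [← pd_add (S.contDiff_cLow k d l) (S.contDiff_cLow l d k) c x]
    exact pd_congr (fun y => (S.pd_g k l d y).symm) c x
  have key : riemLow S.g S.ginv i j k l x + riemLow S.g S.ginv i j l k x = 0 := by
    rw [S.riemLow_formula i j k l x, S.riemLow_formula i j l k x]
    have h1 := hcomb i j
    have h2 := hcomb j i
    have h3 := pd_comm (S.hg k l) j i x
    have h4 := S.P_pair i k j l x
    have h5 := S.P_pair i l j k x
    linarith
  linarith

end Setup

end QY
namespace QY

variable {n : ℕ}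

namespace Setup

variable (S : Setup n)

lemma pd_hess (x : EuclideanSpace ℝ (Fin n)) (c a b : Fin n) :
    pd (hess S.g S.ginv S.f a b) c x
      = pd (pd (pd S.f b) a) c x
        - ∑ p, (pd (christoffel S.g S.ginv p a b) c x * pd S.f p x
            + christoffel S.g S.ginv p a b x * pd (pd S.f p) c x) := by
  have h0 : pd (hess S.g S.ginv S.f a b) c x
      = pd (fun y => pd (pd S.f b) a y
          - ∑ p, christoffel S.g S.ginv p a b y * pd S.f p y) c x :=
    pd_congr (fun y => rfl) c x
  rw [h0, pd_sub (contDiff_pd (contDiff_pd S.hf b) a)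
      (ContDiff.sum fun p _ => (S.contDiff_christoffel p a b).mul (contDiff_pd S.hf p)),
    pd_sum _ _ (fun p _ => (S.contDiff_christoffel p a b).mul (contDiff_pd S.hf p)) c x]
  congr 1
  apply Finset.sum_congr rfl
  intro p _
  exact pd_mul (S.contDiff_christoffel p a b) (contDiff_pd S.hf p) c x

lemma ricci_id (x : EuclideanSpace ℝ (Fin n)) (i j k : Fin n) :
    pd (hess S.g S.ginv S.f j k) i x - pd (hess S.g S.ginv S.f i k) j x
      - ∑ p, christoffel S.g S.ginv p i k x * hess S.g S.ginv S.f j p x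
      + ∑ p, christoffel S.g S.ginv p j k x * hess S.g S.ginv S.f i p x
      = - ∑ p, riemUp S.g S.ginv p i j k x * pd S.f p x := by
  have hq1 : ∑ p, ∑ q, christoffel S.g S.ginv p i k x *
        (christoffel S.g S.ginv q j p x * pd S.f q x)
      = ∑ p, ∑ q, (christoffel S.g S.ginv p j q x * christoffel S.g S.ginv q i k x)
        * pd S.f p x := by
    rw [Finset.sum_comm]
    apply Finset.sum_congr rfl; intro p _
    apply Finset.sum_congr rfl; intro q _
    ring
  have hq2 : ∑ p, ∑ q, christoffel S.g S.ginv p j k x *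
        (christoffel S.g S.ginv q i p x * pd S.f q x)
      = ∑ p, ∑ q, (christoffel S.g S.ginv p i q x * christoffel S.g S.ginv q j k x)
        * pd S.f p x := by
    rw [Finset.sum_comm]
    apply Finset.sum_congr rfl; intro p _
    apply Finset.sum_congr rfl; intro q _
    ring
  rw [S.pd_hess x i j k, S.pd_hess x j i k, pd_comm (contDiff_pd S.hf k) j i x]
  unfold hess riemUp
  simp only [mul_sub, sub_mul, add_mul, Finset.mul_sum, Finset.sum_mul,
    Finset.sum_add_distrib, Finset.sum_sub_distrib, neg_sub, neg_add]
  linarith [hq1, hq2]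

end Setup

end QY
namespace QY

variable {n : ℕ}

namespace Setup

variable (S : Setup n)

lemma pd_hess_sol {lam m : ℝ}
    (hsol : ∀ x i j, hess S.g S.ginv S.f i j x
      = (scal S.g S.ginv x - lam) * S.g x i j + (1 / m) * pd S.f i x * pd S.f j x)
    (x : EuclideanSpace ℝ (Fin n)) (a b c : Fin n) :
    pd (hess S.g S.ginv S.f a b) c x
      = pd (scal S.g S.ginv) c x * S.g x a b
        + (scal S.g S.ginv x - lam) * (S.cLow a c b x + S.cLow b c a x)
        + (1 / m) * (pd (pd S.f a) c x * pd S.f b x + pd S.f a x * pd (pd S.f b) c x) := by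
  have hs : ContDiff ℝ (⊤ : ℕ∞) fun y => scal S.g S.ginv y - lam :=
    S.contDiff_scal.sub contDiff_const
  have hA : ContDiff ℝ (⊤ : ℕ∞) fun y => (scal S.g S.ginv y - lam) * S.g y a b :=
    hs.mul (S.hg a b)
  have hB : ContDiff ℝ (⊤ : ℕ∞) fun y => (1 / m) * (pd S.f a y * pd S.f b y) :=
    contDiff_const.mul ((contDiff_pd S.hf a).mul (contDiff_pd S.hf b))
  have h0 : pd (hess S.g S.ginv S.f a b) c x
      = pd (fun y => (scal S.g S.ginv y - lam) * S.g y a b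
          + (1 / m) * (pd S.f a y * pd S.f b y)) c x := by
    apply pd_congr
    intro y
    rw [hsol y a b]
    ring
  rw [h0, pd_add hA hB c x, pd_mul hs (S.hg a b) c x,
    pd_sub S.contDiff_scal contDiff_const c x, pd_const lam c x,
    pd_const_mul ((contDiff_pd S.hf a).mul (contDiff_pd S.hf b)) (1 / m) c x,
    pd_mul (contDiff_pd S.hf a) (contDiff_pd S.hf b) c x, S.pd_g a b c x]
  have he : pd (fun y => scal S.g S.ginv y) c x = pd (scal S.g S.ginv) c x :=
    pd_congr (fun y => rfl) c x
  rw [he]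
  ring

lemma sum_chr_hess {lam m : ℝ}
    (hsol : ∀ x i j, hess S.g S.ginv S.f i j x
      = (scal S.g S.ginv x - lam) * S.g x i j + (1 / m) * pd S.f i x * pd S.f j x)
    (x : EuclideanSpace ℝ (Fin n)) (a b c : Fin n) :
    ∑ p, christoffel S.g S.ginv p a c x * hess S.g S.ginv S.f b p x
      = (scal S.g S.ginv x - lam) * S.cLow b a c x
        + (1 / m) * pd S.f b x * ∑ p, christoffel S.g S.ginv p a c x * pd S.f p x := by
  have h1 : ∀ p ∈ Finset.univ, christoffel S.g S.ginv p a c x * hess S.g S.ginv S.f b p x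
      = (scal S.g S.ginv x - lam) * (S.g x b p * christoffel S.g S.ginv p a c x)
        + (1 / m) * pd S.f b x * (christoffel S.g S.ginv p a c x * pd S.f p x) := by
    intro p _
    rw [hsol x b p]
    ring
  rw [Finset.sum_congr rfl h1, Finset.sum_add_distrib, ← Finset.mul_sum, ← Finset.mul_sum,
    S.gchristoffel x b a c]

lemma main_id {lam m : ℝ}
    (hsol : ∀ x i j, hess S.g S.ginv S.f i j x
      = (scal S.g S.ginv x - lam) * S.g x i j + (1 / m) * pd S.f i x * pd S.f j x)
    (x : EuclideanSpace ℝ (Fin n)) (i j k : Fin n) :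
    ∑ p, riemUp S.g S.ginv p i j k x * pd S.f p x
      = - pd (scal S.g S.ginv) i x * S.g x j k + pd (scal S.g S.ginv) j x * S.g x i k
        - ((scal S.g S.ginv x - lam) / m)
            * (pd S.f j x * S.g x i k - pd S.f i x * S.g x j k) := by
  have h := S.ricci_id x i j k
  rw [S.pd_hess_sol hsol x j k i, S.pd_hess_sol hsol x i k j,
    S.sum_chr_hess hsol x i j k, S.sum_chr_hess hsol x j i k] at h
  have hik := hsol x i k
  have hjk := hsol x j k
  have hikd : hess S.g S.ginv S.f i k x
      = pd (pd S.f k) i x - ∑ p, christoffel S.g S.ginv p i k x * pd S.f p x := rfl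
  have hjkd : hess S.g S.ginv S.f j k x
      = pd (pd S.f k) j x - ∑ p, christoffel S.g S.ginv p j k x * pd S.f p x := rfl
  rw [hikd] at hik
  rw [hjkd] at hjk
  have hcomm : pd (pd S.f j) i x = pd (pd S.f i) j x := pd_comm S.hf j i x
  have hclow : S.cLow k i j x = S.cLow k j i x := S.cLow_symm k i j x
  linear_combination h - (1 / m) * pd S.f j x * hik
    + (1 / m) * pd S.f i x * hjk - (1 / m) * pd S.f k x * hcomm
    - (scal S.g S.ginv x - lam) * hclow

end Setup

end QY
namespace QY

variable {n : ℕ}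

namespace Setup

variable (S : Setup n)

lemma grad_contract (x : EuclideanSpace ℝ (Fin n)) (a : Fin n) :
    ∑ l, S.g x a l * gradUp S.ginv S.f l x = pd S.f a x := by
  unfold gradUp
  have h1 : ∀ l ∈ Finset.univ, S.g x a l * ∑ q, S.ginv x l q * pd S.f q x
      = ∑ q, (S.g x a l * S.ginv x l q) * pd S.f q x := by
    intro l _
    rw [Finset.mul_sum]
    exact Finset.sum_congr rfl fun q _ => by ring
  rw [Finset.sum_congr rfl h1, Finset.sum_comm]
  have h2 : ∀ q ∈ Finset.univ, ∑ l, (S.g x a l * S.ginv x l q) * pd S.f q x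
      = (if a = q then (1:ℝ) else 0) * pd S.f q x := by
    intro q _
    rw [← Finset.sum_mul, S.hginv]
  rw [Finset.sum_congr rfl h2]
  simp [Finset.sum_ite_eq]

lemma riemLow_up (x : EuclideanSpace ℝ (Fin n)) (i j k : Fin n) :
    ∑ l, riemLow S.g S.ginv i j l k x * gradUp S.ginv S.f l x
      = ∑ p, riemUp S.g S.ginv p i j k x * pd S.f p x := by
  unfold riemLow gradUp
  have h1 : ∀ l ∈ Finset.univ,
      (∑ m', S.g x l m' * riemUp S.g S.ginv m' i j k x) * (∑ q, S.ginv x l q * pd S.f q x)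
      = ∑ m', ∑ q, riemUp S.g S.ginv m' i j k x * pd S.f q x * (S.g x m' l * S.ginv x l q) := by
    intro l _
    rw [Finset.sum_mul]
    apply Finset.sum_congr rfl
    intro m' _
    rw [Finset.mul_sum]
    apply Finset.sum_congr rfl
    intro q _
    rw [S.hgsym x l m']
    ring
  rw [Finset.sum_congr rfl h1, Finset.sum_comm]
  apply Finset.sum_congr rfl
  intro m' _
  rw [Finset.sum_comm]
  have h2 : ∀ q ∈ Finset.univ,
      ∑ l, riemUp S.g S.ginv m' i j k x * pd S.f q x * (S.g x m' l * S.ginv x l q)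
      = (riemUp S.g S.ginv m' i j k x * pd S.f q x) * (if m' = q then (1:ℝ) else 0) := by
    intro q _
    rw [← Finset.mul_sum, S.hginv]
  rw [Finset.sum_congr rfl h2]
  simp [Finset.sum_ite_eq]

lemma riemUp_from_low (x : EuclideanSpace ℝ (Fin n)) (m' a b c : Fin n) :
    riemUp S.g S.ginv m' a b c x = ∑ q, S.ginv x m' q * riemLow S.g S.ginv a b q c x := by
  unfold riemLow
  have h1 : ∀ q ∈ Finset.univ,
      S.ginv x m' q * ∑ r, S.g x q r * riemUp S.g S.ginv r a b c x
      = ∑ r, (S.ginv x m' q * S.g x q r) * riemUp S.g S.ginv r a b c x := by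
    intro q _
    rw [Finset.mul_sum]
    exact Finset.sum_congr rfl fun r _ => by ring
  rw [Finset.sum_congr rfl h1, Finset.sum_comm]
  have h2 : ∀ r ∈ Finset.univ,
      ∑ q, (S.ginv x m' q * S.g x q r) * riemUp S.g S.ginv r a b c x
      = (if m' = r then (1:ℝ) else 0) * riemUp S.g S.ginv r a b c x := by
    intro r _
    rw [← Finset.sum_mul, S.hginv']
  rw [Finset.sum_congr rfl h2]
  simp [Finset.sum_ite_eq]

lemma ricci_low (x : EuclideanSpace ℝ (Fin n)) (a b : Fin n) :
    ricci S.g S.ginv a b x = ∑ p, ∑ q, S.ginv x p q * riemLow S.g S.ginv p a q b x := by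
  unfold ricci
  exact Finset.sum_congr rfl fun p _ => S.riemUp_from_low x p p a b

lemma contract1 (x : EuclideanSpace ℝ (Fin n)) (A : Fin n → ℝ) (j : Fin n) :
    ∑ p, ∑ q, S.ginv x p q * (A p * S.g x j q) = A j := by
  have h1 : ∀ p ∈ Finset.univ, ∑ q, S.ginv x p q * (A p * S.g x j q)
      = A p * (if p = j then (1:ℝ) else 0) := by
    intro p _
    rw [← S.hginv' x p j, Finset.mul_sum]
    apply Finset.sum_congr rfl
    intro q _
    rw [S.hgsym x j q]
    ring
  rw [Finset.sum_congr rfl h1]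
  simp [Finset.sum_ite_eq']

lemma contract2 (x : EuclideanSpace ℝ (Fin n)) :
    ∑ p, ∑ q, S.ginv x p q * S.g x p q = (n : ℝ) := by
  have h1 : ∀ p ∈ Finset.univ, ∑ q, S.ginv x p q * S.g x p q = (1:ℝ) := by
    intro p _
    have : ∀ q ∈ Finset.univ, S.ginv x p q * S.g x p q = S.ginv x p q * S.g x q p :=
      fun q _ => by rw [S.hgsym x p q]
    rw [Finset.sum_congr rfl this, S.hginv']
    simp
  rw [Finset.sum_congr rfl h1]
  simp [Finset.card_univ]

end Setup

end QY
namespace QY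

variable {n : ℕ}

namespace Setup

variable (S : Setup n)

lemma riem_contract {lam m : ℝ}
    (hsol : ∀ x i j, hess S.g S.ginv S.f i j x
      = (scal S.g S.ginv x - lam) * S.g x i j + (1 / m) * pd S.f i x * pd S.f j x)
    (x : EuclideanSpace ℝ (Fin n)) (i j k : Fin n) :
    ∑ l, riemLow S.g S.ginv i j k l x * gradUp S.ginv S.f l x
      = pd (scal S.g S.ginv) i x * S.g x j k - pd (scal S.g S.ginv) j x * S.g x i k
        + ((scal S.g S.ginv x - lam) / m)
            * (pd S.f j x * S.g x i k - pd S.f i x * S.g x j k) := by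
  have h1 : ∀ l ∈ Finset.univ, riemLow S.g S.ginv i j k l x * gradUp S.ginv S.f l x
      = -(riemLow S.g S.ginv i j l k x * gradUp S.ginv S.f l x) := by
    intro l _
    rw [S.riemLow_antisym34 i j k l x]
    ring
  rw [Finset.sum_congr rfl h1, Finset.sum_neg_distrib, S.riemLow_up x i j k,
    S.main_id hsol x i j k]
  ring

lemma ricci_contract {lam m : ℝ}
    (hsol : ∀ x i j, hess S.g S.ginv S.f i j x
      = (scal S.g S.ginv x - lam) * S.g x i j + (1 / m) * pd S.f i x * pd S.f j x)
    (x : EuclideanSpace ℝ (Fin n)) (j : Fin n) :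
    ∑ l, ricci S.g S.ginv j l x * gradUp S.ginv S.f l x
      = -((n : ℝ) - 1) * pd (scal S.g S.ginv) j x
        + ((n : ℝ) - 1) * ((scal S.g S.ginv x - lam) / m) * pd S.f j x := by
  have key : ∑ p, ∑ q, S.ginv x p q
        * (∑ l, riemLow S.g S.ginv p j q l x * gradUp S.ginv S.f l x)
      = ∑ l, ricci S.g S.ginv j l x * gradUp S.ginv S.f l x := by
    have e1 : ∀ p ∈ Finset.univ, ∑ q, S.ginv x p q
          * (∑ l, riemLow S.g S.ginv p j q l x * gradUp S.ginv S.f l x)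
        = ∑ l, ∑ q, (S.ginv x p q * riemLow S.g S.ginv p j q l x)
            * gradUp S.ginv S.f l x := by
      intro p _
      rw [Finset.sum_comm]
      apply Finset.sum_congr rfl
      intro q _
      rw [Finset.mul_sum]
      exact Finset.sum_congr rfl fun l _ => by ring
    rw [Finset.sum_congr rfl e1, Finset.sum_comm]
    apply Finset.sum_congr rfl
    intro l _
    rw [S.ricci_low x j l, Finset.sum_mul]
    apply Finset.sum_congr rfl
    intro p _
    rw [Finset.sum_mul]
  rw [← key]
  have e2 : ∀ p ∈ Finset.univ, ∑ q, S.ginv x p q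
        * (∑ l, riemLow S.g S.ginv p j q l x * gradUp S.ginv S.f l x)
      = ∑ q, (S.ginv x p q * (pd (scal S.g S.ginv) p x * S.g x j q)
          - pd (scal S.g S.ginv) j x * (S.ginv x p q * S.g x p q)
          + ((scal S.g S.ginv x - lam) / m) * pd S.f j x * (S.ginv x p q * S.g x p q)
          - ((scal S.g S.ginv x - lam) / m) * (S.ginv x p q * (pd S.f p x * S.g x j q))) := by
    intro p _
    apply Finset.sum_congr rfl
    intro q _
    rw [S.riem_contract hsol x p j q]
    ring
  rw [Finset.sum_congr rfl e2]
  simp only [Finset.sum_add_distrib, Finset.sum_sub_distrib, ← Finset.mul_sum]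
  rw [S.contract1 x (fun p => pd (scal S.g S.ginv) p x) j, S.contract2 x,
    S.contract1 x (fun p => pd S.f p x) j]
  ring

end Setup

end QY
/-- **(Huang–Li)** For a nontrivial quasi Yamabe gradient soliton
`(R − λ)g_{ij} = ∇_i∇_j f − (1/m)∇_i f ∇_j f`, the Cao–Chen tensor satisfies
`D_{ijk} = W_{ijkl} ∇^l f`.  Stated in local coordinates on a chart. -/
theorem quasi_yamabe_caoChenD_eq_weyl_contraction
    (n : ℕ) (hn : 3 ≤ n)
    (g ginv : EuclideanSpace ℝ (Fin n) → Fin n → Fin n → ℝ)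
    (hg : ∀ i j, ContDiff ℝ (⊤ : ℕ∞) fun y => g y i j)
    (hgsym : ∀ x i j, g x i j = g x j i)
    (hgpos : ∀ x (v : Fin n → ℝ), v ≠ 0 → 0 < ∑ i, ∑ j, g x i j * v i * v j)
    (hginv : ∀ x i j, (∑ k, g x i k * ginv x k j) = if i = j then (1 : ℝ) else 0)
    (f : EuclideanSpace ℝ (Fin n) → ℝ) (hf : ContDiff ℝ (⊤ : ℕ∞) f)
    (lam m : ℝ) (hm : m ≠ 0)
    (hsoliton : ∀ x i j, (scal g ginv x - lam) * g x i j
      = hess g ginv f i j x - (1 / m) * pd f i x * pd f j x)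
    (hnontrivial : ∃ x y, f x ≠ f y) :
    ∀ x i j k, caoChenD g ginv f i j k x
      = ∑ l, weyl g ginv i j k l x * gradUp ginv f l x := by
  intro x i j k
  have h3n : (3 : ℝ) ≤ (n : ℝ) := by exact_mod_cast hn
  have ha : ((n : ℝ) - 1) ≠ 0 := by linarith
  have hb : ((n : ℝ) - 2) ≠ 0 := by linarith
  set S : QY.Setup n := ⟨g, ginv, f, hg, hgsym, hginv, hf⟩ with hSdef
  have hSg : S.g = g := rfl
  have hSginv : S.ginv = ginv := rfl
  have hSf : S.f = f := rfl
  have hsol : ∀ x i j, hess S.g S.ginv S.f i j x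
      = (scal S.g S.ginv x - lam) * S.g x i j + (1 / m) * pd S.f i x * pd S.f j x := by
    intro y a b
    rw [hSg, hSginv, hSf]
    have := hsoliton y a b
    linarith
  have h1 := S.riem_contract hsol x i j k
  have h2 := S.grad_contract x j
  have h3 := S.grad_contract x i
  have h4 := S.ricci_contract hsol x j
  have h5 := S.ricci_contract hsol x i
  rw [hSg, hSginv, hSf] at h1 h2 h3 h4 h5
  -- express the derivative of the scalar curvature via the Ricci contraction
  have hpj : pd (scal g ginv) j x = ((scal g ginv x - lam) / m) * pd f j x
      - (1 / ((n : ℝ) - 1)) * ∑ l, ricci g ginv j l x * gradUp ginv f l x := by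
    field_simp at h4 ⊢
    linarith
  have hpi : pd (scal g ginv) i x = ((scal g ginv x - lam) / m) * pd f i x
      - (1 / ((n : ℝ) - 1)) * ∑ l, ricci g ginv i l x * gradUp ginv f l x := by
    field_simp at h5 ⊢
    linarith
  rw [hpi, hpj] at h1
  have hsplit : ∑ l, weyl g ginv i j k l x * gradUp ginv f l x
      = (∑ l, riemLow g ginv i j k l x * gradUp ginv f l x)
        - (1 / ((n : ℝ) - 2)) * (ricci g ginv i k x * (∑ l, g x j l * gradUp ginv f l x)
          + (∑ l, ricci g ginv j l x * gradUp ginv f l x) * g x i k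
          - (∑ l, ricci g ginv i l x * gradUp ginv f l x) * g x j k
          - ricci g ginv j k x * (∑ l, g x i l * gradUp ginv f l x))
        + (scal g ginv x / (((n : ℝ) - 1) * ((n : ℝ) - 2)))
            * ((∑ l, g x j l * gradUp ginv f l x) * g x i k
              - (∑ l, g x i l * gradUp ginv f l x) * g x j k) := by
    simp only [Finset.mul_sum, Finset.sum_mul, ← Finset.sum_sub_distrib,
      ← Finset.sum_add_distrib]
    apply Finset.sum_congr rfl
    intro l _
    unfold weyl
    ring
  rw [hsplit, h1, h2, h3]
  unfold caoChenD
  field_simp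
  ring
end
end

section
/- If (M^n, g, f) is a gradient Yamabe soliton, i.e., (R − λ)g = ∇²f, then |∇f|² is constant on the regular level sets of f. -/
open scoped BigOperators

noncomputable section

variable {n : ℕ}

lemma det_contDiff {M : EuclideanSpace ℝ (Fin n) → Matrix (Fin n) (Fin n) ℝ}
    (h : ∀ i j, ContDiff ℝ (⊤ : ℕ∞) fun y => M y i j) :
    ContDiff ℝ (⊤ : ℕ∞) fun y => (M y).det := by
  simp only [Matrix.det_apply, Units.smul_def, zsmul_eq_mul]
  apply ContDiff.sum
  intro σ _
  exact (contDiff_const.mul (contDiff_prod fun i _ => h (σ i) i))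

lemma ginv_contDiff (g ginv : EuclideanSpace ℝ (Fin n) → Fin n → Fin n → ℝ)
    (hg : ∀ i j, ContDiff ℝ (⊤ : ℕ∞) fun y => g y i j)
    (hginv : ∀ x i j, (∑ k, g x i k * ginv x k j) = if i = j then (1 : ℝ) else 0)
    (a b : Fin n) : ContDiff ℝ (⊤ : ℕ∞) fun y => ginv y a b := by
  set G : EuclideanSpace ℝ (Fin n) → Matrix (Fin n) (Fin n) ℝ :=
    fun y => Matrix.of fun i j => g y i j with hG
  have hright : ∀ x, G x * (Matrix.of fun i j => ginv x i j) = 1 := by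
    intro x
    ext i j
    simp [Matrix.mul_apply, hG, Matrix.one_apply, hginv x i j]
  have hinv : ∀ x, ginv x a b = (G x)⁻¹ a b := by
    intro x
    rw [Matrix.inv_eq_right_inv (hright x)]
    simp
  have hdetne : ∀ x, (G x).det ≠ 0 := by
    intro x
    have h1 : (G x).det * (Matrix.of fun i j => ginv x i j).det = 1 := by
      have h2 := congrArg Matrix.det (hright x)
      rwa [Matrix.det_mul, Matrix.det_one] at h2
    intro h0; rw [h0, zero_mul] at h1; norm_num at h1
  have hadj : ∀ i j, ContDiff ℝ (⊤ : ℕ∞) fun y => (G y).adjugate i j := by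
    intro i j
    simp only [Matrix.adjugate_apply]
    apply det_contDiff
    intro k l
    by_cases hk : k = j
    · simp [Matrix.updateRow_apply, hk]
      exact contDiff_const
    · simp [Matrix.updateRow_apply, hk]
      exact hg k l
  have hmain : (fun y => ginv y a b) = fun y => ((G y).det)⁻¹ * (G y).adjugate a b := by
    funext y
    rw [hinv y, Matrix.inv_def, Matrix.smul_apply, Ring.inverse_eq_inv, smul_eq_mul]
  rw [hmain]
  apply ContDiff.mul _ (hadj a b)
  exact (det_contDiff hg).inv hdetne

open Matrix in
lemma ginv_facts (g ginv : EuclideanSpace ℝ (Fin n) → Fin n → Fin n → ℝ)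
    (hgsym : ∀ x i j, g x i j = g x j i)
    (hginv : ∀ x i j, (∑ k, g x i k * ginv x k j) = if i = j then (1 : ℝ) else 0) :
    (∀ x i j, ginv x i j = ginv x j i) ∧
    (∀ x i j, (∑ k, ginv x i k * g x k j) = if i = j then (1 : ℝ) else 0) := by
  set G : EuclideanSpace ℝ (Fin n) → Matrix (Fin n) (Fin n) ℝ :=
    fun y => Matrix.of fun i j => g y i j with hG
  set B : EuclideanSpace ℝ (Fin n) → Matrix (Fin n) (Fin n) ℝ :=
    fun y => Matrix.of fun i j => ginv y i j with hB
  have hright : ∀ x, G x * B x = 1 := by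
    intro x; ext i j
    simp [Matrix.mul_apply, hG, hB, Matrix.one_apply, hginv x i j]
  have hleft : ∀ x, B x * G x = 1 := fun x => mul_eq_one_comm.mp (hright x)
  constructor
  · intro x i j
    have hBx : B x = (G x)⁻¹ := (Matrix.inv_eq_right_inv (hright x)).symm
    have hGsym : (G x)ᵀ = G x := by
      ext a b; simp [hG, Matrix.transpose_apply, hgsym x b a]
    have : (B x)ᵀ = B x := by
      rw [hBx, Matrix.transpose_nonsing_inv, hGsym]
    calc ginv x i j = B x i j := rfl
      _ = (B x)ᵀ j i := rfl
      _ = B x j i := by rw [this]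
      _ = ginv x j i := rfl
  · intro x i j
    have := congrFun (congrFun (hleft x) i) j
    simpa [Matrix.mul_apply, hG, hB, Matrix.one_apply] using this

lemma pd_sum {ι : Type*} (s : Finset ι) (F : ι → EuclideanSpace ℝ (Fin n) → ℝ)
    (i : Fin n) (x : EuclideanSpace ℝ (Fin n))
    (hF : ∀ j ∈ s, DifferentiableAt ℝ (F j) x) :
    pd (fun y => ∑ j ∈ s, F j y) i x = ∑ j ∈ s, pd (F j) i x := by
  unfold pd; rw [fderiv_fun_sum hF]; simp

lemma pd_mul (a b : EuclideanSpace ℝ (Fin n) → ℝ) (i : Fin n) (x : EuclideanSpace ℝ (Fin n))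
    (ha : DifferentiableAt ℝ a x) (hb : DifferentiableAt ℝ b x) :
    pd (fun y => a y * b y) i x = pd a i x * b x + a x * pd b i x := by
  unfold pd; rw [fderiv_fun_mul ha hb]; simp; ring

lemma pd_const (c : ℝ) (i : Fin n) (x : EuclideanSpace ℝ (Fin n)) :
    pd (fun _ => c) i x = 0 := by unfold pd; simp

lemma pd_contDiff {f : EuclideanSpace ℝ (Fin n) → ℝ} (hf : ContDiff ℝ (⊤ : ℕ∞) f) (b : Fin n) :
    ContDiff ℝ (⊤ : ℕ∞) (pd f b) := by
  exact (hf.fderiv_right (by simp)).clm_apply contDiff_const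

lemma sum_swap4 {M : Type*} [AddCommMonoid M] (F : Fin n → Fin n → Fin n → Fin n → M) :
    ∑ a, ∑ b, ∑ k, ∑ l, F a b k l = ∑ k, ∑ l, ∑ a, ∑ b, F a b k l := by
  have e1 : ∑ a, ∑ b, ∑ k, ∑ l, F a b k l = ∑ a, ∑ k, ∑ b, ∑ l, F a b k l :=
    Finset.sum_congr rfl fun a _ => Finset.sum_comm
  have e2 : ∑ a, ∑ k, ∑ b, ∑ l, F a b k l = ∑ k, ∑ a, ∑ b, ∑ l, F a b k l :=
    Finset.sum_comm
  have e3 : ∑ k, ∑ a, ∑ b, ∑ l, F a b k l = ∑ k, ∑ a, ∑ l, ∑ b, F a b k l :=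
    Finset.sum_congr rfl fun k _ => Finset.sum_congr rfl fun a _ => Finset.sum_comm
  have e4 : ∑ k, ∑ a, ∑ l, ∑ b, F a b k l = ∑ k, ∑ l, ∑ a, ∑ b, F a b k l :=
    Finset.sum_congr rfl fun k _ => Finset.sum_comm
  rw [e1, e2, e3, e4]

lemma yamabe_key
    (g ginv : EuclideanSpace ℝ (Fin n) → Fin n → Fin n → ℝ)
    (hg : ∀ i j, ContDiff ℝ (⊤ : ℕ∞) fun y => g y i j)
    (hgsym : ∀ x i j, g x i j = g x j i)
    (hginv : ∀ x i j, (∑ k, g x i k * ginv x k j) = if i = j then (1 : ℝ) else 0)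
    (hA : ∀ a b, ContDiff ℝ (⊤ : ℕ∞) fun y => ginv y a b)
    (hAsym : ∀ x i j, ginv x i j = ginv x j i)
    (hAleft : ∀ x i j, (∑ k, ginv x i k * g x k j) = if i = j then (1 : ℝ) else 0)
    (f : EuclideanSpace ℝ (Fin n) → ℝ) (hf : ContDiff ℝ (⊤ : ℕ∞) f)
    (S : EuclideanSpace ℝ (Fin n) → ℝ)
    (hsoliton : ∀ x i j, S x * g x i j = hess g ginv f i j x)
    (x : EuclideanSpace ℝ (Fin n)) (i : Fin n) :
    pd (fun y => ∑ a, ∑ b, ginv y a b * pd f a y * pd f b y) i x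
      = 2 * S x * pd f i x := by
  -- differentiability helpers
  have dA : ∀ (y : EuclideanSpace ℝ (Fin n)) a b, DifferentiableAt ℝ (fun z => ginv z a b) y :=
    fun y a b => ((hA a b).differentiable (by simp)) y
  have dg : ∀ (y : EuclideanSpace ℝ (Fin n)) a b, DifferentiableAt ℝ (fun z => g z a b) y :=
    fun y a b => ((hg a b).differentiable (by simp)) y
  have dP : ∀ (y : EuclideanSpace ℝ (Fin n)) a, DifferentiableAt ℝ (pd f a) y :=
    fun y a => ((pd_contDiff hf a).differentiable (by simp)) y
  -- Step 1: expand the derivative of the big sum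
  have step1 : pd (fun y => ∑ a, ∑ b, ginv y a b * pd f a y * pd f b y) i x
      = ∑ a, ∑ b, (pd (fun y => ginv y a b) i x * pd f a x * pd f b x
          + ginv x a b * pd (pd f a) i x * pd f b x
          + ginv x a b * pd f a x * pd (pd f b) i x) := by
    rw [pd_sum _ _ _ _ (fun a _ => by
      exact DifferentiableAt.fun_sum fun b _ => ((dA x a b).mul (dP x a)).mul (dP x b))]
    refine Finset.sum_congr rfl fun a _ => ?_
    rw [pd_sum _ _ _ _ (fun b _ => ((dA x a b).fun_mul (dP x a)).fun_mul (dP x b))]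
    refine Finset.sum_congr rfl fun b _ => ?_
    rw [pd_mul _ _ _ _ ((dA x a b).fun_mul (dP x a)) (dP x b),
        pd_mul _ _ _ _ (dA x a b) (dP x a)]
    ring
  -- Step 2: derivative of the inverse metric
  have step2 : ∀ a b, pd (fun y => ginv y a b) i x
      = -∑ c, ∑ d, ginv x a c * pd (fun y => g y c d) i x * ginv x d b := by
    intro a b
    have h0 : ∀ p q : Fin n, ∑ k, (pd (fun y => g y p k) i x * ginv x k q
        + g x p k * pd (fun y => ginv y k q) i x) = 0 := by
      intro p q
      have hc : (fun y => ∑ k, g y p k * ginv y k q) = fun _ => (if p = q then (1:ℝ) else 0) :=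
        funext fun y => hginv y p q
      have h1 : pd (fun y => ∑ k, g y p k * ginv y k q) i x = 0 := by
        rw [hc]; exact pd_const _ _ _
      rw [pd_sum _ _ _ _ (fun k _ => (dg x p k).fun_mul (dA x k q))] at h1
      rw [← h1]
      exact Finset.sum_congr rfl fun k _ => (pd_mul _ _ _ _ (dg x p k) (dA x k q)).symm
    have h2 : ∀ c, ∑ d, g x c d * pd (fun y => ginv y d b) i x
        = -∑ d, pd (fun y => g y c d) i x * ginv x d b := by
      intro c
      have h3 := h0 c b
      rw [Finset.sum_add_distrib] at h3
      linarith
    calc pd (fun y => ginv y a b) i x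
        = ∑ d, (if a = d then (1:ℝ) else 0) * pd (fun y => ginv y d b) i x := by
          simp
      _ = ∑ d, (∑ c, ginv x a c * g x c d) * pd (fun y => ginv y d b) i x := by
          refine Finset.sum_congr rfl fun d _ => ?_
          rw [hAleft x a d]
      _ = ∑ c, ginv x a c * (∑ d, g x c d * pd (fun y => ginv y d b) i x) := by
          simp only [Finset.sum_mul, Finset.mul_sum]
          rw [Finset.sum_comm]
          exact Finset.sum_congr rfl fun c _ => Finset.sum_congr rfl fun d _ => by ring
      _ = ∑ c, ginv x a c * (-∑ d, pd (fun y => g y c d) i x * ginv x d b) := by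
          exact Finset.sum_congr rfl fun c _ => by rw [h2 c]
      _ = -∑ c, ∑ d, ginv x a c * pd (fun y => g y c d) i x * ginv x d b := by
          simp only [mul_neg, Finset.mul_sum, ← Finset.sum_neg_distrib]
          exact Finset.sum_congr rfl fun c _ => Finset.sum_congr rfl fun d _ => by ring
  -- Step 3: soliton equation rewrites second derivatives of f
  have step3 : ∀ a, pd (pd f a) i x
      = S x * g x i a + ∑ k, christoffel g ginv k i a x * pd f k x := by
    intro a
    have h := hsoliton x i a
    unfold hess at h
    linarith
  -- abbreviations as plain terms; heavy sum manipulation below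
  have hT1T2 : (∑ a, ∑ b, ginv x a b * pd (pd f a) i x * pd f b x)
      = ∑ a, ∑ b, ginv x a b * pd f a x * pd (pd f b) i x := by
    rw [Finset.sum_comm]
    exact Finset.sum_congr rfl fun a _ => Finset.sum_congr rfl fun b _ => by
      rw [hAsym x b a]; ring
  have hT0 : (∑ a, ∑ b, pd (fun y => ginv y a b) i x * pd f a x * pd f b x)
      = -∑ a, ∑ b, ∑ c, ∑ d, ginv x a c * pd (fun y => g y c d) i x * ginv x d b
          * pd f a x * pd f b x := by
    rw [← Finset.sum_neg_distrib]
    refine Finset.sum_congr rfl fun a _ => ?_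
    rw [← Finset.sum_neg_distrib]
    refine Finset.sum_congr rfl fun b _ => ?_
    rw [step2 a b]
    simp only [neg_mul, Finset.sum_mul]
  have hT2a : ∀ a b, ginv x a b * pd f a x * pd (pd f b) i x
      = ginv x a b * pd f a x * (S x * g x i b)
        + ∑ k, ∑ l, (1/2) * (ginv x a b * pd f a x * pd f k x * ginv x k l *
            (pd (fun y => g y b l) i x + pd (fun y => g y i l) b x
              - pd (fun y => g y i b) l x)) := by
    intro a b
    rw [step3 b]
    unfold christoffel
    rw [mul_add]
    congr 1
    simp only [Finset.mul_sum, Finset.sum_mul]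
    exact Finset.sum_congr rfl fun k _ => Finset.sum_congr rfl fun l _ => by ring
  have piece_a : (∑ a, ∑ b, ginv x a b * pd f a x * (S x * g x i b))
      = S x * pd f i x := by
    have h5 : ∀ a, (∑ b, ginv x a b * pd f a x * (S x * g x i b))
        = S x * pd f a x * (if a = i then (1:ℝ) else 0) := by
      intro a
      calc (∑ b, ginv x a b * pd f a x * (S x * g x i b))
          = S x * pd f a x * ∑ b, ginv x a b * g x b i := by
            rw [Finset.mul_sum]
            exact Finset.sum_congr rfl fun b _ => by rw [hgsym x i b]; ring
        _ = S x * pd f a x * (if a = i then (1:ℝ) else 0) := by rw [hAleft x a i]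
    rw [Finset.sum_congr rfl fun a _ => h5 a]
    simp
  have hT2 : (∑ a, ∑ b, ginv x a b * pd f a x * pd (pd f b) i x)
      = S x * pd f i x + (1/2) * (
          (∑ a, ∑ b, ∑ k, ∑ l, ginv x a b * pd f a x * pd f k x * ginv x k l
            * pd (fun y => g y b l) i x)
        + (∑ a, ∑ b, ∑ k, ∑ l, ginv x a b * pd f a x * pd f k x * ginv x k l
            * pd (fun y => g y i l) b x)
        - (∑ a, ∑ b, ∑ k, ∑ l, ginv x a b * pd f a x * pd f k x * ginv x k l
            * pd (fun y => g y i b) l x)) := by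
    rw [Finset.sum_congr rfl fun a _ => Finset.sum_congr rfl fun b _ => hT2a a b]
    rw [Finset.sum_congr rfl fun a _ => Finset.sum_add_distrib, Finset.sum_add_distrib]
    rw [piece_a]
    congr 1
    simp only [mul_add, mul_sub, Finset.sum_add_distrib, Finset.sum_sub_distrib,
      Finset.mul_sum]
  have hW23 : (∑ a, ∑ b, ∑ k, ∑ l, ginv x a b * pd f a x * pd f k x * ginv x k l
        * pd (fun y => g y i l) b x)
      = ∑ a, ∑ b, ∑ k, ∑ l, ginv x a b * pd f a x * pd f k x * ginv x k l
        * pd (fun y => g y i b) l x := by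
    rw [sum_swap4 (fun a b k l => ginv x a b * pd f a x * pd f k x * ginv x k l
      * pd (fun y => g y i l) b x)]
    exact Finset.sum_congr rfl fun a _ => Finset.sum_congr rfl fun b _ =>
      Finset.sum_congr rfl fun k _ => Finset.sum_congr rfl fun l _ => by ring
  have hW1V : (∑ a, ∑ b, ∑ c, ∑ d, ginv x a c * pd (fun y => g y c d) i x * ginv x d b
        * pd f a x * pd f b x)
      = ∑ a, ∑ b, ∑ k, ∑ l, ginv x a b * pd f a x * pd f k x * ginv x k l
        * pd (fun y => g y b l) i x := by
    refine Finset.sum_congr rfl fun a _ => ?_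
    rw [show (∑ b, ∑ c, ∑ d, ginv x a c * pd (fun y => g y c d) i x * ginv x d b
        * pd f a x * pd f b x)
      = ∑ c, ∑ b, ∑ d, ginv x a c * pd (fun y => g y c d) i x * ginv x d b
        * pd f a x * pd f b x from Finset.sum_comm]
    exact Finset.sum_congr rfl fun b _ => Finset.sum_congr rfl fun k _ =>
      Finset.sum_congr rfl fun l _ => by rw [hAsym x l k]; ring
  rw [step1]
  simp only [Finset.sum_add_distrib]
  rw [hT0, hT1T2, hT2, hW23, hW1V]
  ring


/-- On a gradient Yamabe soliton `(R − λ)g = ∇²f`, the quantity `|∇f|²` is constant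
on the regular level sets of `f`: in local coordinates, the differential of
`|∇f|² = g^{ab} ∇_a f ∇_b f` vanishes on every direction `w` tangent to a level set
of `f` (i.e. with `df(w) = 0`). -/
theorem yamabe_soliton_grad_norm_constant_on_level_sets
    (n : ℕ) (hn : 3 ≤ n)
    (g ginv : EuclideanSpace ℝ (Fin n) → Fin n → Fin n → ℝ)
    (hg : ∀ i j, ContDiff ℝ (⊤ : ℕ∞) fun y => g y i j)
    (hgsym : ∀ x i j, g x i j = g x j i)
    (hgpos : ∀ x (v : Fin n → ℝ), v ≠ 0 → 0 < ∑ i, ∑ j, g x i j * v i * v j)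
    (hginv : ∀ x i j, (∑ k, g x i k * ginv x k j) = if i = j then (1 : ℝ) else 0)
    (f : EuclideanSpace ℝ (Fin n) → ℝ) (hf : ContDiff ℝ (⊤ : ℕ∞) f)
    (lam : ℝ)
    (hsoliton : ∀ x i j, (scal g ginv x - lam) * g x i j = hess g ginv f i j x) :
    ∀ x (w : Fin n → ℝ), (∑ i, w i * pd f i x) = 0 →
      ∑ i, w i * pd (fun y => ∑ a, ∑ b, ginv y a b * pd f a y * pd f b y) i x = 0 := by
  intro x w hw
  have hA : ∀ a b, ContDiff ℝ (⊤ : ℕ∞) fun y => ginv y a b := ginv_contDiff g ginv hg hginv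
  obtain ⟨hAsym, hAleft⟩ := ginv_facts g ginv hgsym hginv
  have key := yamabe_key g ginv hg hgsym hginv hA hAsym hAleft f hf
      (fun y => scal g ginv y - lam) (fun y i j => hsoliton y i j) x
  calc ∑ i, w i * pd (fun y => ∑ a, ∑ b, ginv y a b * pd f a y * pd f b y) i x
      = ∑ i, (2 * (scal g ginv x - lam)) * (w i * pd f i x) :=
        Finset.sum_congr rfl fun i _ => by rw [key i]; ring
    _ = (2 * (scal g ginv x - lam)) * ∑ i, w i * pd f i x := by rw [Finset.mul_sum]
    _ = 0 := by rw [hw, mul_zero]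
end
end
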